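/- arXiv:2211.03951 — 4 statements merged into one kernel-verified Lean document; each statement's English description precedes it below -/
import Mathlib

section
/- Let Γ be a countable group with a left-invariant metric d of finite exponential growth rate, and let M be a set of probability measures on Γ satisfying the uniform first moment condition. Then the map μ ↦ H(μ) = −∑_{x∈Γ} μ(x) log μ(x) is finite and continuous on M with respect to the total variation distance. -/
open Filter Real Topology MeasureTheory
open scoped ENNReal

namespace NS

/-- The probability of a set under a `PMF`, as a real number. -/
noncomputable def pmfSet {X : Type*} (μ : PMF X) (A : Set X) : ℝ :=
  (∑' x : A, μ (x : X)).toReal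

/-- Total variation distance between two `PMF`s: `sup_{A ⊆ X} |μ(A) - ν(A)|`. -/
noncomputable def tv {X : Type*} (μ ν : PMF X) : ℝ :=
  ⨆ A : Set X, |pmfSet μ A - pmfSet ν A|

/-- Convolution of two probability measures on a group. -/
noncomputable def conv {G : Type*} [Group G] (μ ν : PMF G) : PMF G :=
  μ.bind fun x => ν.map fun y => x * y

/-- `n`-fold convolution of a probability measure on a group (law of `w_n = x_1 ⋯ x_n`). -/
noncomputable def convN {G : Type*} [Group G] (μ : PMF G) : ℕ → PMF G
  | 0 => PMF.pure 1
  | n + 1 => conv (convN μ n) μ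

/-- Product of two probability measures. -/
noncomputable def prodPMF {X Y : Type*} (μ : PMF X) (ν : PMF Y) : PMF (X × Y) :=
  μ.bind fun x => ν.map fun y => (x, y)

/-- Diagonal embedding `μ_diag` of a probability measure: `μ_diag((x,y)) = μ(x)` if `x = y`. -/
noncomputable def diagPMF {X : Type*} (μ : PMF X) : PMF (X × X) :=
  μ.map fun x => (x, x)

/-- Convex combination `ρ·μ + (1-ρ)·ν` of two `PMF`s, for `ρ ∈ [0,1]`. -/
noncomputable def mix {X : Type*} (ρ : ℝ) (μ ν : PMF X) : PMF X :=
  (PMF.bernoulli (min (Real.toNNReal ρ) 1) (min_le_right _ _)).bind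
    fun b => if b then μ else ν

/-- The measure `π^ρ := ρ·(μ×μ) + (1-ρ)·μ_diag` on `G × G`. -/
noncomputable def piRho {G : Type*} [Group G] (μ : PMF G) (ρ : ℝ) : PMF (G × G) :=
  mix ρ (prodPMF μ μ) (diagPMF μ)

/-- Shannon entropy `H(μ) = -∑ μ(x) log μ(x)` of a `PMF`. -/
noncomputable def entH {X : Type*} (μ : PMF X) : ℝ :=
  ∑' x, Real.negMulLog ((μ x).toReal)

/-- `d` is the left-invariant word metric associated with the generating set `S`. -/
def IsWordMetric {G : Type*} [Group G] (S : Finset G) (d : G → G → ℝ) : Prop :=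
  ∀ x y : G, d x y =
    ((sInf {n : ℕ | ∃ f : Fin n → G, (∀ i, f i ∈ S) ∧ x⁻¹ * y = (List.ofFn f).prod} : ℕ) : ℝ)

/-- Gromov product `(x|y)_w = (d(x,w) + d(y,w) - d(x,y))/2`. -/
noncomputable def gromov {G : Type*} (d : G → G → ℝ) (w x y : G) : ℝ :=
  (d x w + d y w - d x y) / 2

/-- Gromov hyperbolicity of a metric, via the Gromov product four-point condition. -/
def IsHyperbolic {G : Type*} (d : G → G → ℝ) : Prop :=
  ∃ δ : ℝ, 0 ≤ δ ∧ ∀ x y z w : G,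
    min (gromov d w x z) (gromov d w z y) - δ ≤ gromov d w x y

/-- `μ` is non-elementary: the subgroup generated by its support contains
a free subgroup of rank 2. -/
def NonElementary {G : Type*} [Group G] (μ : PMF G) : Prop :=
  ∃ φ : FreeGroup (Fin 2) →* G,
    Function.Injective φ ∧ ∀ w, φ w ∈ Subgroup.closure μ.support

/-- `μ` has finite first moment: `∑_x d(o,x) μ(x) < ∞`. -/
def FiniteFirstMoment {G : Type*} [Group G] (d : G → G → ℝ) (μ : PMF G) : Prop :=
  Summable fun x => d 1 x * (μ x).toReal

/-- `d` is a left-invariant metric on the group `G`. -/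
def IsLeftInvMetric {G : Type*} [Group G] (d : G → G → ℝ) : Prop :=
  (∀ x y : G, 0 ≤ d x y) ∧ (∀ x y : G, d x y = 0 ↔ x = y) ∧
  (∀ x y : G, d x y = d y x) ∧ (∀ x y z : G, d x z ≤ d x y + d y z) ∧
  (∀ g x y : G, d (g * x) (g * y) = d x y)

/-- The growth function `R ↦ (1/R) log #{x : |x| ≤ R}`. -/
noncomputable def growthFn {G : Type*} [Group G] (d : G → G → ℝ) : ℝ → ℝ :=
  fun R => Real.log (Nat.card {x : G | d 1 x ≤ R}) / R

/-- `d` has finite exponential growth rate: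
balls are finite and `limsup_{R→∞} (1/R) log #B(o,R) < ∞`. -/
def FiniteExpGrowth {G : Type*} [Group G] (d : G → G → ℝ) : Prop :=
  (∀ R : ℝ, {x : G | d 1 x ≤ R}.Finite) ∧
  Filter.IsBoundedUnder (· ≤ ·) Filter.atTop (growthFn d)

/-- The exponential growth rate `v = limsup_{R→∞} (1/R) log #B(o,R)`. -/
noncomputable def expRate {G : Type*} [Group G] (d : G → G → ℝ) : ℝ :=
  Filter.limsup (growthFn d) Filter.atTop

/-- Uniform first moment condition (M) for a set of probability measures. -/
def UnifFirstMoment {G : Type*} [Group G] (d : G → G → ℝ) (M : Set (PMF G)) : Prop :=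
  (∀ μ ∈ M, Summable fun x => d 1 x * (μ x).toReal) ∧
  ∀ K : ℕ → Finset G, Monotone K → (⋃ n, (K n : Set G)) = Set.univ →
    ∀ ε > 0, ∃ N : ℕ, ∀ n ≥ N, ∀ μ ∈ M,
      (∑' x : {x : G // x ∉ K n}, d 1 (x : G) * (μ (x : G)).toReal) ≤ ε

/-! The pointwise inequality `-t log t ≤ t s + e^{-s}` with `s = c |x|` bounds each entropy term by
`c |x| μ(x) + e^{-c|x|}`. Once `c` exceeds the growth rate, `∑ e^{-c|x|}` converges, so the entropy
is finite and, by the uniform first moment condition, its tails outside large balls are uniformly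
small on `M`. On the remaining finite set, the total variation distance controls every `μ(x)`,
and `t ↦ -t log t` is uniformly continuous on `[0, 1]`. -/

lemma negMulLog_le_mul_add_exp_neg {t : ℝ} (ht : 0 ≤ t) (s : ℝ) :
    negMulLog t ≤ t * s + exp (-s) := by
  rcases ht.eq_or_lt with rfl | ht
  · simpa using (exp_pos _).le
  have hlog := log_le_sub_one_of_pos (div_pos (exp_pos (-s)) ht)
  rw [log_div (exp_ne_zero _) ht.ne', log_exp] at hlog
  have hmul := mul_le_mul_of_nonneg_left hlog ht.le
  have hcancel : t * (exp (-s) / t) = exp (-s) := by field_simp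
  rw [negMulLog]
  nlinarith

section Growth

variable {X : Type*} {ℓ : X → ℝ} {a b c : ℝ}

lemma sum_filter_floor_eq_exp_neg_mul_le (hℓ : ∀ x, 0 ≤ ℓ x)
    (hfin : ∀ R, {x | ℓ x ≤ R}.Finite)
    (hcard : ∀ R, 0 ≤ R → ({x | ℓ x ≤ R}.ncard : ℝ) ≤ exp (a * R + b)) (hc : 0 ≤ c)
    (u : Finset X) (j : ℕ) :
    ∑ x ∈ u with ⌊ℓ x⌋₊ = j, exp (-(c * ℓ x)) ≤ exp (a + b) * exp (a - c) ^ j := by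
  have hterm : ∀ x ∈ u.filter (fun x => ⌊ℓ x⌋₊ = j), exp (-(c * ℓ x)) ≤ exp (-(c * j)) := by
    intro x hx
    have hj : (j : ℝ) ≤ ℓ x := (Finset.mem_filter.1 hx).2 ▸ Nat.floor_le (hℓ x)
    gcongr
  have hsub : (↑(u.filter fun x => ⌊ℓ x⌋₊ = j) : Set X) ⊆ {x | ℓ x ≤ j + 1} := by
    intro x hx
    have hlt := Nat.lt_floor_add_one (ℓ x)
    rw [(Finset.mem_filter.1 hx).2] at hlt
    exact hlt.le
  calc ∑ x ∈ u with ⌊ℓ x⌋₊ = j, exp (-(c * ℓ x))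
      ≤ (u.filter fun x => ⌊ℓ x⌋₊ = j).card * exp (-(c * j)) := by
        simpa using Finset.sum_le_card_nsmul _ _ _ hterm
    _ ≤ ({x | ℓ x ≤ j + 1}.ncard : ℝ) * exp (-(c * j)) := by
        gcongr
        rw [← Set.ncard_coe_finset]
        exact_mod_cast Set.ncard_le_ncard hsub (hfin _)
    _ ≤ exp (a * (j + 1) + b) * exp (-(c * j)) := by
        gcongr
        exact hcard _ (by positivity)
    _ = exp (a + b) * exp (a - c) ^ j := by
        rw [← exp_nat_mul, ← exp_add, ← exp_add]
        ring_nf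

lemma summable_exp_neg_mul_of_ncard_le (hℓ : ∀ x, 0 ≤ ℓ x)
    (hfin : ∀ R, {x | ℓ x ≤ R}.Finite)
    (hcard : ∀ R, 0 ≤ R → ({x | ℓ x ≤ R}.ncard : ℝ) ≤ exp (a * R + b)) (hc : 0 ≤ c)
    (hac : a < c) :
    Summable fun x => exp (-(c * ℓ x)) := by
  classical
  have hr0 : 0 ≤ exp (a - c) := (exp_pos _).le
  have hr1 : exp (a - c) < 1 := exp_lt_one_iff.2 (by linarith)
  refine summable_of_sum_le (c := exp (a + b) * ∑' j : ℕ, exp (a - c) ^ j)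
    (fun x => (exp_pos _).le) fun u => ?_
  rw [← Finset.sum_fiberwise_of_maps_to (t := u.image fun x => ⌊ℓ x⌋₊)
    (fun x hx => Finset.mem_image_of_mem _ hx)]
  calc ∑ j ∈ u.image (fun x => ⌊ℓ x⌋₊), ∑ x ∈ u with ⌊ℓ x⌋₊ = j, exp (-(c * ℓ x))
      ≤ ∑ j ∈ u.image (fun x => ⌊ℓ x⌋₊), exp (a + b) * exp (a - c) ^ j :=
        Finset.sum_le_sum fun j _ => sum_filter_floor_eq_exp_neg_mul_le hℓ hfin hcard hc u j
    _ = exp (a + b) * ∑ j ∈ u.image (fun x => ⌊ℓ x⌋₊), exp (a - c) ^ j :=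
        (Finset.mul_sum ..).symm
    _ ≤ exp (a + b) * ∑' j : ℕ, exp (a - c) ^ j := by
        gcongr
        exact Summable.sum_le_tsum _ (fun j _ => by positivity)
          (summable_geometric_of_lt_one hr0 hr1)

end Growth

section GroupGrowth

variable {G : Type*} [Group G] {d : G → G → ℝ}

lemma FiniteExpGrowth.exists_ncard_le_exp (hgrow : FiniteExpGrowth d) :
    ∃ a b : ℝ, ∀ R, 0 ≤ R → ({x : G | d 1 x ≤ R}.ncard : ℝ) ≤ exp (a * R + b) := by
  obtain ⟨C, hC⟩ := hgrow.2
  obtain ⟨R₀, hR₀⟩ := eventually_atTop.1 (eventually_map.1 hC)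
  set R₁ := max R₀ 1
  refine ⟨max C 0, log {x : G | d 1 x ≤ R₁}.ncard, fun R hR => ?_⟩
  have hb : 0 ≤ log {x : G | d 1 x ≤ R₁}.ncard := log_natCast_nonneg _
  rcases le_or_gt R₁ R with hR₁ | hR₁
  · have hRpos : 0 < R := lt_of_lt_of_le (by positivity) hR₁
    have hlog : log {x : G | d 1 x ≤ R}.ncard ≤ max C 0 * R := by
      have := hR₀ R (le_trans (le_max_left _ _) hR₁)
      rw [growthFn, div_le_iff₀ hRpos, Nat.card_coe_set_eq] at this
      exact this.trans (by gcongr; exact le_max_left _ _)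
    calc ({x : G | d 1 x ≤ R}.ncard : ℝ) ≤ exp (log {x : G | d 1 x ≤ R}.ncard) := le_exp_log _
      _ ≤ exp (max C 0 * R + log {x : G | d 1 x ≤ R₁}.ncard) := by gcongr; linarith
  · have hmono : {x : G | d 1 x ≤ R}.ncard ≤ {x : G | d 1 x ≤ R₁}.ncard :=
      Set.ncard_le_ncard (fun x (hx : d 1 x ≤ R) => hx.trans hR₁.le) (hgrow.1 R₁)
    calc ({x : G | d 1 x ≤ R}.ncard : ℝ) ≤ {x : G | d 1 x ≤ R₁}.ncard := by exact_mod_cast hmono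
      _ ≤ exp (log {x : G | d 1 x ≤ R₁}.ncard) := le_exp_log _
      _ ≤ exp (max C 0 * R + log {x : G | d 1 x ≤ R₁}.ncard) := by
        gcongr
        have : 0 ≤ max C 0 * R := by positivity
        linarith

lemma FiniteExpGrowth.exists_summable_exp_neg_mul (hd : ∀ x, 0 ≤ d 1 x)
    (hgrow : FiniteExpGrowth d) : ∃ c > 0, Summable fun x : G => exp (-(c * d 1 x)) := by
  obtain ⟨a, b, hab⟩ := hgrow.exists_ncard_le_exp
  refine ⟨max a 0 + 1, by positivity, ?_⟩
  exact summable_exp_neg_mul_of_ncard_le hd hgrow.1 hab (by positivity)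
    (by linarith [le_max_left a 0])

end GroupGrowth

section Entropy

variable {X : Type*}

lemma toReal_apply_le_one (μ : PMF X) (x : X) : (μ x).toReal ≤ 1 :=
  ENNReal.toReal_le_of_le_ofReal zero_le_one (by simpa using μ.coe_le_one x)

lemma negMulLog_toReal_nonneg (μ : PMF X) (x : X) : 0 ≤ negMulLog (μ x).toReal :=
  negMulLog_nonneg ENNReal.toReal_nonneg (toReal_apply_le_one μ x)

lemma negMulLog_toReal_le (μ : PMF X) (ℓ : X → ℝ) (c : ℝ) (x : X) :
    negMulLog (μ x).toReal ≤ c * (ℓ x * (μ x).toReal) + exp (-(c * ℓ x)) :=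
  (negMulLog_le_mul_add_exp_neg ENNReal.toReal_nonneg (c * ℓ x)).trans_eq (by ring)

variable {μ : PMF X} {ℓ : X → ℝ} {c : ℝ}

lemma summable_negMulLog_toReal (hexp : Summable fun x => exp (-(c * ℓ x)))
    (hmom : Summable fun x => ℓ x * (μ x).toReal) :
    Summable fun x => negMulLog (μ x).toReal :=
  .of_nonneg_of_le (negMulLog_toReal_nonneg μ) (negMulLog_toReal_le μ ℓ c)
    ((hmom.mul_left c).add hexp)

lemma tsum_compl_negMulLog_toReal_le (hexp : Summable fun x => exp (-(c * ℓ x)))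
    (hmom : Summable fun x => ℓ x * (μ x).toReal) (s : Finset X) :
    ∑' x : {x // x ∉ s}, negMulLog (μ x).toReal ≤
      c * ∑' x : {x // x ∉ s}, ℓ x * (μ x).toReal + ∑' x : {x // x ∉ s}, exp (-(c * ℓ x)) := by
  have hmom' : Summable fun x : {x // x ∉ s} => c * (ℓ x * (μ x).toReal) :=
    (hmom.mul_left c).subtype _
  have hexp' : Summable fun x : {x // x ∉ s} => exp (-(c * ℓ x)) := hexp.subtype _
  rw [← tsum_mul_left, ← hmom'.tsum_add hexp']
  exact Summable.tsum_le_tsum (fun x => negMulLog_toReal_le μ ℓ c x)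
    ((summable_negMulLog_toReal hexp hmom).subtype _) (hmom'.add hexp')

end Entropy

section TotalVariation

variable {X : Type*}

lemma pmfSet_le_one (μ : PMF X) (A : Set X) : pmfSet μ A ≤ 1 := by
  refine ENNReal.toReal_le_of_le_ofReal zero_le_one ?_
  simpa [μ.tsum_coe] using ENNReal.tsum_comp_le_tsum_of_injective Subtype.coe_injective μ

lemma abs_toReal_sub_le_tv (μ ν : PMF X) (x : X) :
    |(μ x).toReal - (ν x).toReal| ≤ tv μ ν := by
  have hbdd : BddAbove (Set.range fun A : Set X => |pmfSet μ A - pmfSet ν A|) :=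
    ⟨1, Set.forall_mem_range.2 fun A => abs_sub_le_of_nonneg_of_le ENNReal.toReal_nonneg
      (pmfSet_le_one μ A) ENNReal.toReal_nonneg (pmfSet_le_one ν A)⟩
  calc |(μ x).toReal - (ν x).toReal| = |pmfSet μ {x} - pmfSet ν {x}| := by simp [pmfSet]
    _ ≤ tv μ ν := le_ciSup hbdd {x}

lemma exists_sum_abs_negMulLog_sub_lt_of_tv_lt (s : Finset X) {ε : ℝ} (hε : 0 < ε) :
    ∃ δ > 0, ∀ μ ν : PMF X, tv μ ν < δ →
      ∑ x ∈ s, |negMulLog (ν x).toReal - negMulLog (μ x).toReal| < ε := by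
  set η := ε / (s.card + 1)
  obtain ⟨δ, hδ, hη⟩ := Metric.uniformContinuousOn_iff.1
    (isCompact_Icc.uniformContinuousOn_of_continuous continuous_negMulLog.continuousOn) η
    (by positivity)
  refine ⟨δ, hδ, fun μ ν hμν => ?_⟩
  have hmem : ∀ (ρ : PMF X) x, (ρ x).toReal ∈ Set.Icc (0 : ℝ) 1 :=
    fun ρ x => ⟨ENNReal.toReal_nonneg, toReal_apply_le_one ρ x⟩
  have hterm : ∀ x ∈ s, |negMulLog (ν x).toReal - negMulLog (μ x).toReal| ≤ η := fun x _ =>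
    (hη _ (hmem ν x) _ (hmem μ x)
      (by rw [dist_comm, Real.dist_eq]; exact (abs_toReal_sub_le_tv μ ν x).trans_lt hμν)).le
  calc ∑ x ∈ s, |negMulLog (ν x).toReal - negMulLog (μ x).toReal|
      ≤ s.card * η := by simpa using Finset.sum_le_card_nsmul _ _ _ hterm
    _ < ε := by
      rw [mul_div_assoc', div_lt_iff₀ (by positivity)]
      nlinarith

end TotalVariation

lemma abs_tsum_sub_tsum_le {X : Type*} {f g : X → ℝ} (hf : Summable f) (hg : Summable g)
    (hf0 : 0 ≤ f) (hg0 : 0 ≤ g) (s : Finset X) :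
    |∑' x, f x - ∑' x, g x| ≤
      ∑ x ∈ s, |f x - g x| + (∑' x : {x // x ∉ s}, f x + ∑' x : {x // x ∉ s}, g x) := by
  have htail_f : 0 ≤ ∑' x : {x // x ∉ s}, f x := tsum_nonneg fun x => hf0 x
  have htail_g : 0 ≤ ∑' x : {x // x ∉ s}, g x := tsum_nonneg fun x => hg0 x
  rw [← hf.sum_add_tsum_subtype_compl s, ← hg.sum_add_tsum_subtype_compl s,
    add_sub_add_comm, ← Finset.sum_sub_distrib]
  exact (abs_add_le _ _).trans (add_le_add (Finset.abs_sum_le_sum_abs _ _)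
    (abs_sub_le_iff.2 ⟨by linarith, by linarith⟩))

lemma UnifFirstMoment.exists_finset_tsum_compl_negMulLog_le {G : Type*} [Group G]
    {d : G → G → ℝ} {M : Set (PMF G)} (hM : UnifFirstMoment d M) (hd : ∀ x, 0 ≤ d 1 x)
    (hgrow : FiniteExpGrowth d) {ε : ℝ} (hε : 0 < ε) :
    ∃ s : Finset G, ∀ ν ∈ M, ∑' x : {x // x ∉ s}, negMulLog (ν x).toReal ≤ ε := by
  obtain ⟨c, hc, hexp⟩ := hgrow.exists_summable_exp_neg_mul hd
  set K : ℕ → Finset G := fun n => (hgrow.1 n).toFinset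
  have hKmono : Monotone K := fun m n hmn x => by
    simpa [K] using fun h : d 1 x ≤ m => h.trans (Nat.cast_le.2 hmn)
  have hKcover : ∀ x, ∃ n, x ∈ K n :=
    fun x => (exists_nat_ge (d 1 x)).imp fun n hn => by simpa [K] using hn
  have hmom : ∀ᶠ n in atTop, ∀ ν ∈ M,
      ∑' x : {x // x ∉ K n}, d 1 x * (ν x).toReal ≤ ε / (2 * c) := by
    obtain ⟨N, hN⟩ := hM.2 K hKmono (Set.eq_univ_of_forall fun x => Set.mem_iUnion.2 (hKcover x))
      (ε / (2 * c)) (by positivity)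
    exact eventually_atTop.2 ⟨N, hN⟩
  have hexp_tail : ∀ᶠ n in atTop, ∑' x : {x // x ∉ K n}, exp (-(c * d 1 x)) < ε / 2 :=
    ((tendsto_tsum_compl_atTop_zero fun x => exp (-(c * d 1 x))).comp
      (tendsto_atTop_finset_of_monotone hKmono hKcover)).eventually (gt_mem_nhds (half_pos hε))
  obtain ⟨n, hn_mom, hn_exp⟩ := (hmom.and hexp_tail).exists
  refine ⟨K n, fun ν hν => ?_⟩
  calc ∑' x : {x // x ∉ K n}, negMulLog (ν x).toReal
      ≤ c * ∑' x : {x // x ∉ K n}, d 1 x * (ν x).toReal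
          + ∑' x : {x // x ∉ K n}, exp (-(c * d 1 x)) :=
        tsum_compl_negMulLog_toReal_le hexp (hM.1 ν hν) _
    _ ≤ c * (ε / (2 * c)) + ε / 2 :=
        add_le_add (mul_le_mul_of_nonneg_left (hn_mom ν hν) hc.le) hn_exp.le
    _ = ε := by field_simp; ring

theorem statement7_general {G : Type*} [Group G]
    (d : G → G → ℝ) (hmet : IsLeftInvMetric d) (hgrow : FiniteExpGrowth d)
    (M : Set (PMF G)) (hM : UnifFirstMoment d M) :
    (∀ μ ∈ M, Summable fun x => Real.negMulLog ((μ x).toReal)) ∧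
    ∀ μ ∈ M, ∀ ε > 0, ∃ δ > 0, ∀ μ' ∈ M, tv μ μ' < δ → |entH μ' - entH μ| < ε := by
  have hd : ∀ x, 0 ≤ d 1 x := hmet.1 1
  obtain ⟨c, -, hexp⟩ := hgrow.exists_summable_exp_neg_mul hd
  have hsum : ∀ μ ∈ M, Summable fun x => negMulLog (μ x).toReal :=
    fun μ hμ => summable_negMulLog_toReal hexp (hM.1 μ hμ)
  refine ⟨hsum, fun μ hμ ε hε => ?_⟩
  obtain ⟨s, hs⟩ := hM.exists_finset_tsum_compl_negMulLog_le hd hgrow (by positivity : 0 < ε / 3)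
  obtain ⟨δ, hδ, hfin⟩ := exists_sum_abs_negMulLog_sub_lt_of_tv_lt s (by positivity : 0 < ε / 3)
  refine ⟨δ, hδ, fun μ' hμ' hμμ' => ?_⟩
  calc |entH μ' - entH μ|
      ≤ ∑ x ∈ s, |negMulLog (μ' x).toReal - negMulLog (μ x).toReal|
          + (∑' x : {x // x ∉ s}, negMulLog (μ' x).toReal
            + ∑' x : {x // x ∉ s}, negMulLog (μ x).toReal) :=
        abs_tsum_sub_tsum_le (hsum μ' hμ') (hsum μ hμ) (negMulLog_toReal_nonneg μ')
          (negMulLog_toReal_nonneg μ) s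
    _ < ε / 3 + (ε / 3 + ε / 3) :=
        add_lt_add_of_lt_of_le (hfin μ μ' hμμ') (add_le_add (hs μ' hμ') (hs μ hμ))
    _ = ε := by ring

theorem statement7 {G : Type*} [Group G] [Countable G]
    (d : G → G → ℝ) (hmet : IsLeftInvMetric d) (hgrow : FiniteExpGrowth d)
    (M : Set (PMF G)) (hM : UnifFirstMoment d M) :
    (∀ μ ∈ M, Summable fun x => Real.negMulLog ((μ x).toReal)) ∧
    ∀ μ ∈ M, ∀ ε > 0, ∃ δ > 0, ∀ μ' ∈ M, tv μ μ' < δ → |entH μ' - entH μ| < ε :=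
  statement7_general d hmet hgrow M hM

end NS
end

section
/- Let Γ be a countable group with a left-invariant metric d of finite exponential growth rate v, and fix D > v. Then there exist constants C > 0 and D′ with 0 < D′ < D − v such that for every probability measure μ on Γ and every sufficiently large N (with the threshold independent of μ), one has −∑_{x ∈ Γ, |x| > N} μ(x) log μ(x) ≤ D ∑_{x ∈ Γ, |x| > N} |x| μ(x) + C e^{−D′ N}. -/
open Filter Real Topology MeasureTheory
open scoped ENNReal

namespace NS

/-!
Young's inequality for `t ↦ -t log t` gives `-t log t ≤ b t + e^{-b-1}` for every `b`. Taking
`b = D|x|` and splitting `D = a + D'` with `v < a`, the error term at a point with `|x| > N` is at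
most `e^{-D'N} e^{-a|x|}`. Summing over `|x| > N`, the remaining Poincaré series `∑ e^{-a|x|}`
converges because `a` exceeds the exponential growth rate of the balls: grouping the points by
`⌈|x|⌉` compares it with a geometric series.
-/

lemma negMulLog_le_mul_add_exp {t : ℝ} (ht : 0 ≤ t) (b : ℝ) :
    negMulLog t ≤ b * t + exp (-b - 1) := by
  -- Rescale `negMulLog_le_one_sub_self` by `c = exp (-b - 1)`, where `-t log t - b t` is maximal.
  set c := exp (-b - 1)
  have hc : 0 < c := exp_pos _
  have hct : c * (t / c) = t := mul_div_cancel₀ t hc.ne'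
  have hlog : negMulLog c = (b + 1) * c := by simp only [negMulLog, c, log_exp]; ring
  have key := negMulLog_le_one_sub_self (div_nonneg ht hc.le)
  calc negMulLog t = t / c * negMulLog c + c * negMulLog (t / c) := by
        rw [← negMulLog_mul, hct]
    _ ≤ t / c * ((b + 1) * c) + c * (1 - t / c) := by
        rw [hlog]; gcongr
    _ = b * t + c := by field_simp; ring

section Growth

variable {G : Type*} [Group G] {d : G → G → ℝ}

lemma growthFn_nonneg {R : ℝ} (hR : 0 ≤ R) : 0 ≤ growthFn d R :=
  div_nonneg (log_natCast_nonneg _) hR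

lemma expRate_nonneg (hbdd : IsBoundedUnder (· ≤ ·) atTop (growthFn d)) : 0 ≤ expRate d :=
  le_limsup_of_frequently_le ((eventually_ge_atTop 0).mono fun _ ↦ growthFn_nonneg).frequently
    hbdd

lemma eventually_card_ball_le (hbdd : IsBoundedUnder (· ≤ ·) atTop (growthFn d)) {b : ℝ}
    (hb : expRate d < b) :
    ∀ᶠ k : ℕ in atTop, (Nat.card {x : G | d 1 x ≤ k} : ℝ) ≤ exp (b * k) := by
  have hR : ∀ᶠ R in atTop, 0 < R ∧ growthFn d R < b :=
    (eventually_gt_atTop 0).and (eventually_lt_of_limsup_lt hb hbdd)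
  filter_upwards [tendsto_natCast_atTop_atTop.eventually hR] with k ⟨hk, hgrowth⟩
  calc (Nat.card {x : G | d 1 x ≤ k} : ℝ) ≤ exp (log (Nat.card {x : G | d 1 x ≤ k})) :=
        le_exp_log _
    _ ≤ exp (b * k) := exp_le_exp.2 ((div_lt_iff₀ hk).1 hgrowth).le

end Growth

theorem summable_exp_neg_mul_of_card_le {X : Type*} {ℓ : X → ℝ}
    (hfin : ∀ R : ℝ, {x | ℓ x ≤ R}.Finite) {a b : ℝ} (ha : 0 ≤ a) (hba : b < a)
    (hcard : ∀ᶠ k : ℕ in atTop, (Nat.card {x | ℓ x ≤ k} : ℝ) ≤ exp (b * k)) :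
    Summable fun x ↦ exp (-a * ℓ x) := by
  set φ : X → ℕ := fun x ↦ ⌈ℓ x⌉₊
  have hsub (k : ℕ) : φ ⁻¹' {k} ⊆ {x | ℓ x ≤ k} := fun x hx ↦ hx ▸ Nat.le_ceil (ℓ x)
  have hfiber (k : ℕ) (hk : 1 ≤ k) :
      ∑' x : φ ⁻¹' {k}, exp (-a * ℓ x) ≤ Nat.card {x | ℓ x ≤ k} * exp (-a * (k - 1)) := by
    have : Fintype (φ ⁻¹' {k}) := ((hfin k).subset (hsub k)).fintype
    have hlower (x : φ ⁻¹' {k}) : (k : ℝ) - 1 ≤ ℓ x := by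
      have : k - 1 < φ x := by rw [x.2]; omega
      have := (Nat.lt_ceil.1 this).le
      push_cast [hk] at this
      exact this
    rw [tsum_fintype]
    calc ∑ x : φ ⁻¹' {k}, exp (-a * ℓ x) ≤ ∑ _x : φ ⁻¹' {k}, exp (-a * (k - 1)) :=
          Finset.sum_le_sum fun x _ ↦ exp_le_exp.2 (by nlinarith [hlower x])
      _ ≤ Nat.card {x | ℓ x ≤ k} * exp (-a * (k - 1)) := by
          rw [Finset.sum_const, Finset.card_univ, nsmul_eq_mul, ← Nat.card_eq_fintype_card]
          gcongr
          exact_mod_cast Nat.card_mono (hfin k) (hsub k)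
  rw [← (Equiv.sigmaFiberEquiv φ).summable_iff]
  refine (summable_sigma_of_nonneg fun _ ↦ (exp_pos _).le).2
    ⟨fun k ↦ ((hfin k).subset (hsub k)).summable fun x ↦ exp (-a * ℓ x), ?_⟩
  refine (summable_geometric_of_lt_one (exp_pos (b - a)).le (exp_lt_one_iff.2 (by linarith))
    |>.mul_left (exp a)).of_norm_bounded_eventually_nat ?_
  filter_upwards [hcard, eventually_ge_atTop 1] with k hk hk1
  rw [Real.norm_of_nonneg (tsum_nonneg fun _ ↦ (exp_pos _).le)]
  calc _ ≤ Nat.card {x | ℓ x ≤ k} * exp (-a * (k - 1)) := hfiber k hk1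
    _ ≤ exp (b * k) * exp (-a * (k - 1)) := by gcongr
    _ = exp a * exp (b - a) ^ k := by
        rw [← exp_nat_mul, ← exp_add, ← exp_add]; ring_nf

lemma negMulLog_le_add_exp_of_lt {t ℓ a D' N : ℝ} (ht : 0 ≤ t) (hD' : 0 ≤ D') (hN : N < ℓ) :
    negMulLog t ≤ (a + D') * ℓ * t + exp (-D' * N) * exp (-a * ℓ) := by
  have hexp : exp (-((a + D') * ℓ) - 1) ≤ exp (-D' * N) * exp (-a * ℓ) := by
    rw [← exp_add]
    exact exp_le_exp.2 (by nlinarith)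
  linarith [negMulLog_le_mul_add_exp ht ((a + D') * ℓ)]

theorem tsum_ofReal_negMulLog_le {X : Type*} (ℓ : X → ℝ) (μ : PMF X) {a D' : ℝ} (ha : 0 ≤ a)
    (hD' : 0 ≤ D') (N : ℝ) :
    ∑' x : {x // N < ℓ x}, ENNReal.ofReal (negMulLog (μ x).toReal)
      ≤ ENNReal.ofReal (a + D') * ∑' x : {x // N < ℓ x}, ENNReal.ofReal (ℓ x) * μ x
        + ENNReal.ofReal (exp (-D' * N))
          * ∑' x : {x // N < ℓ x}, ENNReal.ofReal (exp (-a * ℓ x)) := by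
  rw [← ENNReal.tsum_mul_left, ← ENNReal.tsum_mul_left, ← ENNReal.tsum_add]
  refine ENNReal.tsum_le_tsum fun x ↦ ?_
  have ht : 0 ≤ (μ x).toReal := ENNReal.toReal_nonneg
  calc ENNReal.ofReal (negMulLog (μ x).toReal)
      ≤ ENNReal.ofReal ((a + D') * (ℓ x * (μ x).toReal) + exp (-D' * N) * exp (-a * ℓ x)) :=
        ENNReal.ofReal_le_ofReal (by linarith [negMulLog_le_add_exp_of_lt ht hD' x.2 (a := a)])
    _ ≤ _ := by
        grw [ENNReal.ofReal_add_le, ENNReal.ofReal_mul (by linarith), ENNReal.ofReal_mul' ht,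
          ENNReal.ofReal_toReal (μ.apply_ne_top x), ENNReal.ofReal_mul (exp_pos _).le]

theorem statement8_general {G : Type*} [Group G]
    (d : G → G → ℝ) (hgrow : FiniteExpGrowth d)
    (D : ℝ) (hD : expRate d < D) :
    ∃ C : ℝ, 0 < C ∧ ∃ D' : ℝ, 0 < D' ∧ D' < D - expRate d ∧
      ∃ N₀ : ℝ, ∀ μ : PMF G, ∀ N ≥ N₀,
        (∑' x : {x : G // N < d 1 x}, ENNReal.ofReal (Real.negMulLog ((μ (x : G)).toReal)))
          ≤ ENNReal.ofReal D *
              (∑' x : {x : G // N < d 1 x}, ENNReal.ofReal (d 1 (x : G)) * μ (x : G))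
            + ENNReal.ofReal (C * Real.exp (-D' * N)) := by
  obtain ⟨hfin, hbdd⟩ := hgrow
  have hv := expRate_nonneg hbdd
  set v := expRate d
  set D' := (D - v) / 2 with hD'
  set a := (D + v) / 2 with ha
  have hsum : Summable fun x : G ↦ exp (-a * d 1 x) :=
    summable_exp_neg_mul_of_card_le hfin (by linarith) (by linarith : (v + a) / 2 < a)
      (eventually_card_ball_le hbdd (by linarith))
  set Z := ∑' x, exp (-a * d 1 x)
  have hZ : 0 ≤ Z := tsum_nonneg fun _ ↦ (exp_pos _).le
  refine ⟨Z + 1, by positivity, D', by linarith, by linarith, 0, fun μ N _ ↦ ?_⟩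
  have htail :
      ∑' x : {x // N < d 1 x}, ENNReal.ofReal (exp (-a * d 1 x)) ≤ ENNReal.ofReal (Z + 1) :=
    calc _ ≤ ∑' x, ENNReal.ofReal (exp (-a * d 1 x)) :=
          ENNReal.tsum_comp_le_tsum_of_injective Subtype.val_injective _
      _ = ENNReal.ofReal Z := (ENNReal.ofReal_tsum_of_nonneg (fun _ ↦ (exp_pos _).le) hsum).symm
      _ ≤ _ := ENNReal.ofReal_le_ofReal (by linarith)
  have key := tsum_ofReal_negMulLog_le (d 1) μ (a := a) (D' := D') (by linarith) (by linarith) N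
  rw [show a + D' = D by linarith] at key
  refine key.trans ?_
  rw [mul_comm (Z + 1), ENNReal.ofReal_mul (exp_pos _).le]
  gcongr

theorem statement8 {G : Type*} [Group G] [Countable G]
    (d : G → G → ℝ) (hmet : IsLeftInvMetric d) (hgrow : FiniteExpGrowth d)
    (D : ℝ) (hD : expRate d < D) :
    ∃ C : ℝ, 0 < C ∧ ∃ D' : ℝ, 0 < D' ∧ D' < D - expRate d ∧
      ∃ N₀ : ℝ, ∀ μ : PMF G, ∀ N ≥ N₀,
        (∑' x : {x : G // N < d 1 x}, ENNReal.ofReal (Real.negMulLog ((μ (x : G)).toReal)))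
          ≤ ENNReal.ofReal D *
              (∑' x : {x : G // N < d 1 x}, ENNReal.ofReal (d 1 (x : G)) * μ (x : G))
            + ENNReal.ofReal (C * Real.exp (-D' * N)) :=
  statement8_general d hgrow D hD

end NS
end

section
/- Let Γ be a countable group with a left-invariant metric d, and let μ be a probability measure on Γ with finite first moment. Then for every real L > 4 and every positive integer n, the n-fold convolution μ_n satisfies ∑_{x : |x| > nL} |x| μ_n(x) ≤ n ∑_{x : |x| > √L} |x| μ(x) + (2n/√L) ∑_{x∈Γ} |x| μ(x). -/
open Filter Real Topology MeasureTheory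
open scoped ENNReal

namespace NS

/-!
Write `|x| = d(1, x)`, which is subadditive by left invariance, and `A = {|w_n| > nL}`.
Splitting `|w_n| ≤ ∑ |x_i|` according to whether `|x_i| > √L` gives
`E[|w_n|; A] ≤ n E[|x|; |x| > √L] + n √L P(A)`, and Markov's inequality together with
`E|w_n| ≤ n E|x|` gives `P(A) ≤ E|x| / L`, so the last term is at most `(n / √L) E|x|`.
The splitting is done by induction on `n`, conditioning on the last increment; this replaces the
indicator of `A` by an arbitrary weight `g ≤ 1`, a class stable under that conditioning.
-/

noncomputable def lexpect {X : Type*} (ν : PMF X) (f : X → ℝ≥0∞) : ℝ≥0∞ := ∑' x, ν x * f x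

section lexpect

variable {X Y : Type*} (ν : PMF X)

lemma lexpect_mono {f g : X → ℝ≥0∞} (h : ∀ x, f x ≤ g x) : lexpect ν f ≤ lexpect ν g :=
  ENNReal.tsum_le_tsum fun x => mul_le_mul_right (h x) _

lemma lexpect_add (f g : X → ℝ≥0∞) :
    lexpect ν (fun x => f x + g x) = lexpect ν f + lexpect ν g := by
  simp only [lexpect, mul_add, ENNReal.tsum_add]

lemma lexpect_const_mul (c : ℝ≥0∞) (f : X → ℝ≥0∞) :
    lexpect ν (fun x => c * f x) = c * lexpect ν f := by
  simp only [lexpect, mul_left_comm _ c, ENNReal.tsum_mul_left]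

lemma lexpect_const (c : ℝ≥0∞) : lexpect ν (fun _ => c) = c := by
  simp only [lexpect, ENNReal.tsum_mul_right, PMF.tsum_coe, one_mul]

lemma lexpect_pure (a : X) (f : X → ℝ≥0∞) : lexpect (PMF.pure a) f = f a := by
  rw [lexpect, tsum_eq_single a fun b hb => by simp [PMF.pure_apply, hb]]
  simp

lemma lexpect_bind (k : X → PMF Y) (f : Y → ℝ≥0∞) :
    lexpect (ν.bind k) f = lexpect ν fun x => lexpect (k x) f := by
  simp only [lexpect, PMF.bind_apply, ← ENNReal.tsum_mul_right, ← ENNReal.tsum_mul_left,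
    mul_assoc]
  exact ENNReal.tsum_comm

lemma lexpect_map (φ : X → Y) (f : Y → ℝ≥0∞) :
    lexpect (ν.map φ) f = lexpect ν fun x => f (φ x) := by
  simp only [PMF.map, lexpect_bind, Function.comp_apply, lexpect_pure]

lemma mul_lexpect_indicator_le {f : X → ℝ≥0∞} {c : ℝ≥0∞} {s : Set X}
    (h : ∀ x ∈ s, c ≤ f x) : c * lexpect ν (s.indicator 1) ≤ lexpect ν f := by
  rw [← lexpect_const_mul]
  refine lexpect_mono ν fun x => ?_
  by_cases hx : x ∈ s <;> simp [hx, h]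

lemma tsum_mul_toReal_eq_lexpect {a : X → ℝ} (ha : ∀ x, 0 ≤ a x) :
    ∑' x, a x * (ν x).toReal = (lexpect ν fun x => ENNReal.ofReal (a x)).toReal := by
  rw [lexpect, ENNReal.tsum_toReal_eq fun x => ENNReal.mul_ne_top (PMF.apply_ne_top _ _)
    ENNReal.ofReal_ne_top]
  exact tsum_congr fun x => by rw [ENNReal.toReal_mul, ENNReal.toReal_ofReal (ha x), mul_comm]

lemma lexpect_ofReal_eq_ofReal_tsum {a : X → ℝ} (ha : ∀ x, 0 ≤ a x)
    (hsum : Summable fun x => a x * (ν x).toReal) :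
    (lexpect ν fun x => ENNReal.ofReal (a x)) = ENNReal.ofReal (∑' x, a x * (ν x).toReal) := by
  rw [ENNReal.ofReal_tsum_of_nonneg (fun x => mul_nonneg (ha x) ENNReal.toReal_nonneg) hsum]
  refine tsum_congr fun x => ?_
  rw [ENNReal.ofReal_mul (ha x), ENNReal.ofReal_toReal (PMF.apply_ne_top _ _), mul_comm]

lemma tsum_subtype_eq_lexpect_indicator {a : X → ℝ} (ha : ∀ x, 0 ≤ a x) (P : X → Prop) :
    ∑' x : {x // P x}, a x * (ν x).toReal
      = (lexpect ν ({x | P x}.indicator fun x => ENNReal.ofReal (a x))).toReal := by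
  refine (tsum_subtype {x | P x} fun x => a x * (ν x).toReal).trans ?_
  simp only [Set.indicator_mul_left]
  rw [tsum_mul_toReal_eq_lexpect ν (Set.indicator_nonneg fun x _ => ha x)]
  congr 2 with x
  by_cases hx : P x <;> simp [hx]

end lexpect

section Subadditive

variable {G : Type*} [Group G] {f : G → ℝ≥0∞}

lemma lexpect_conv (ν μ : PMF G) (g : G → ℝ≥0∞) :
    lexpect (conv ν μ) g = lexpect ν fun x => lexpect μ fun y => g (x * y) := by
  simp only [conv, lexpect_bind, lexpect_map]

lemma mul_le_indicator_add_mul {X : Type*} (f : X → ℝ≥0∞) {b : ℝ≥0∞} (hb : b ≤ 1) (c : ℝ≥0∞)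
    (y : X) : f y * b ≤ {y | c < f y}.indicator f y + c * b := by
  by_cases hy : c < f y
  · simpa [hy] using le_add_right (mul_le_of_le_one_right' hb)
  · simpa [hy] using mul_le_mul_left (not_lt.1 hy) b

variable (μ : PMF G) (hfsub : ∀ x y, f (x * y) ≤ f x + f y) (c : ℝ≥0∞)
include hfsub

lemma lexpect_conv_mul_le (ν : PMF G) {g : G → ℝ≥0∞} (hg : ∀ x, g x ≤ 1) :
    lexpect (conv ν μ) (fun x => f x * g x)
      ≤ lexpect ν (fun x => f x * lexpect μ fun y => g (x * y))
        + lexpect μ ({y | c < f y}.indicator f) + c * lexpect (conv ν μ) g := by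
  set T := lexpect μ ({y | c < f y}.indicator f)
  have hpoint : ∀ x, (lexpect μ fun y => f (x * y) * g (x * y))
      ≤ f x * (lexpect μ fun y => g (x * y)) + T + c * lexpect μ fun y => g (x * y) := by
    intro x
    calc (lexpect μ fun y => f (x * y) * g (x * y))
        ≤ lexpect μ fun y => f x * g (x * y) + ({y | c < f y}.indicator f y + c * g (x * y)) :=
          lexpect_mono μ fun y => by
            grw [hfsub x y, add_mul, mul_le_indicator_add_mul f (hg (x * y)) c y]
      _ = _ := by rw [lexpect_add, lexpect_add, lexpect_const_mul, lexpect_const_mul, add_assoc]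
  calc lexpect (conv ν μ) (fun x => f x * g x)
      ≤ lexpect ν fun x =>
          f x * (lexpect μ fun y => g (x * y)) + T + c * lexpect μ fun y => g (x * y) := by
        rw [lexpect_conv]; exact lexpect_mono ν hpoint
    _ = _ := by rw [lexpect_add, lexpect_add, lexpect_const, lexpect_const_mul, lexpect_conv]

lemma lexpect_convN_mul_le (hf1 : f 1 = 0) (n : ℕ) {g : G → ℝ≥0∞} (hg : ∀ x, g x ≤ 1) :
    lexpect (convN μ n) (fun x => f x * g x)
      ≤ n * lexpect μ ({y | c < f y}.indicator f) + n * c * lexpect (convN μ n) g := by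
  induction n generalizing g with
  | zero => simp [convN, lexpect_pure, hf1]
  | succ n ih =>
    set T := lexpect μ ({y | c < f y}.indicator f)
    set g' : G → ℝ≥0∞ := fun x => lexpect μ fun y => g (x * y)
    have hg' : ∀ x, g' x ≤ 1 := fun x => (lexpect_mono μ fun y => hg _).trans_eq (lexpect_const μ 1)
    have hEg : lexpect (convN μ n) g' = lexpect (convN μ (n + 1)) g := (lexpect_conv _ μ g).symm
    calc lexpect (convN μ (n + 1)) (fun x => f x * g x)
        ≤ lexpect (convN μ n) (fun x => f x * g' x) + T + c * lexpect (convN μ (n + 1)) g :=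
          lexpect_conv_mul_le μ hfsub c _ hg
      _ ≤ (n * T + n * c * lexpect (convN μ n) g') + T + c * lexpect (convN μ (n + 1)) g := by
          grw [ih hg']
      _ = (n + 1 : ℕ) * T + (n + 1 : ℕ) * c * lexpect (convN μ (n + 1)) g := by
          rw [hEg]; push_cast; ring

lemma lexpect_convN_le (hf1 : f 1 = 0) (n : ℕ) : lexpect (convN μ n) f ≤ n * lexpect μ f := by
  have hsupp : {y | 0 < f y}.indicator f = f := by
    simp only [pos_iff_ne_zero]; exact Set.indicator_support
  simpa [hsupp] using lexpect_convN_mul_le μ hfsub 0 hf1 n (g := 1) fun _ => le_rfl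

lemma lexpect_convN_indicator_le (hf1 : f 1 = 0) {L : ℝ} {n : ℕ} {s : Set G}
    (hs : ∀ x ∈ s, ENNReal.ofReal (n * L) ≤ f x) :
    lexpect (convN μ n) (s.indicator f)
      ≤ n * lexpect μ ({y | ENNReal.ofReal √L < f y}.indicator f)
        + ENNReal.ofReal (2 * n / √L) * lexpect μ f := by
  set P := lexpect (convN μ n) (s.indicator 1)
  have hmarkov : ENNReal.ofReal (n * L) * P ≤ n * lexpect μ f :=
    (mul_lexpect_indicator_le _ hs).trans (lexpect_convN_le μ hfsub hf1 n)
  have hP : n * ENNReal.ofReal √L * P ≤ ENNReal.ofReal (2 * n / √L) * lexpect μ f := by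
    rcases le_or_gt L 0 with hL | hL
    · simp [Real.sqrt_eq_zero'.2 hL]
    have hsq : √L ^ 2 = L := Real.sq_sqrt hL.le
    calc n * ENNReal.ofReal √L * P = ENNReal.ofReal (√L / L) * (ENNReal.ofReal (n * L) * P) := by
          rw [← mul_assoc, ← ENNReal.ofReal_mul (by positivity), ← ENNReal.ofReal_natCast,
            ← ENNReal.ofReal_mul (by positivity)]
          congr 2
          field_simp
      _ ≤ ENNReal.ofReal (√L / L) * (n * lexpect μ f) := by gcongr
      _ = ENNReal.ofReal (n / √L) * lexpect μ f := by
          rw [← mul_assoc, ← ENNReal.ofReal_natCast, ← ENNReal.ofReal_mul (by positivity)]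
          congr 2
          field_simp
          rw [hsq]
      _ ≤ ENNReal.ofReal (2 * n / √L) * lexpect μ f := by gcongr; linarith
  have hind : s.indicator f = fun x => f x * s.indicator 1 x := by
    ext x; by_cases hx : x ∈ s <;> simp [hx]
  rw [hind]
  grw [lexpect_convN_mul_le μ hfsub _ hf1 n fun x => Set.indicator_le_self' (by simp) x, hP]

end Subadditive

lemma IsLeftInvMetric.dist_one_mul_le {G : Type*} [Group G] {d : G → G → ℝ}
    (hd : IsLeftInvMetric d) (x y : G) : d 1 (x * y) ≤ d 1 x + d 1 y := by
  obtain ⟨-, -, -, htri, hinv⟩ := hd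
  calc d 1 (x * y) ≤ d 1 x + d x (x * y) := htri 1 x (x * y)
    _ = d 1 x + d 1 y := by rw [← hinv x 1 y, mul_one]

theorem statement9_general {G : Type*} [Group G]
    (d : G → G → ℝ) (hmet : IsLeftInvMetric d)
    (μ : PMF G) (hmom : FiniteFirstMoment d μ)
    (L : ℝ) (n : ℕ) :
    (∑' x : {x : G // (n : ℝ) * L < d 1 x}, d 1 (x : G) * ((convN μ n) (x : G)).toReal)
      ≤ (n : ℝ) * (∑' x : {x : G // Real.sqrt L < d 1 x}, d 1 (x : G) * (μ (x : G)).toReal)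
        + (2 * (n : ℝ) / Real.sqrt L) * (∑' x : G, d 1 x * (μ x).toReal) := by
  have hd : ∀ x, 0 ≤ d 1 x := hmet.1 1
  set F : G → ℝ≥0∞ := fun x => ENNReal.ofReal (d 1 x)
  have hF1 : F 1 = 0 := by simp [F, (hmet.2.1 1 1).2 rfl]
  have hFsub : ∀ x y, F (x * y) ≤ F x + F y := fun x y =>
    (ENNReal.ofReal_le_ofReal (hmet.dist_one_mul_le x y)).trans ENNReal.ofReal_add_le
  have hfin : lexpect μ F ≠ ⊤ := by
    rw [lexpect_ofReal_eq_ofReal_tsum μ hd hmom]; exact ENNReal.ofReal_ne_top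
  have hsets : {y | ENNReal.ofReal √L < F y} = {y | √L < d 1 y} := by
    ext y; exact ENNReal.ofReal_lt_ofReal_iff_of_nonneg (Real.sqrt_nonneg L)
  have htail := lexpect_convN_indicator_le μ hFsub hF1 (L := L) (n := n)
    (s := {x | n * L < d 1 x}) fun x hx => ENNReal.ofReal_le_ofReal hx.le
  have hfin' : lexpect μ ({y | √L < d 1 y}.indicator F) ≠ ⊤ :=
    ne_top_of_le_ne_top hfin (lexpect_mono μ (Set.indicator_le_self _ F))
  rw [hsets] at htail
  rw [tsum_subtype_eq_lexpect_indicator _ hd, tsum_subtype_eq_lexpect_indicator _ hd,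
    tsum_mul_toReal_eq_lexpect _ hd]
  calc _ ≤ (n * lexpect μ ({y | √L < d 1 y}.indicator F)
        + ENNReal.ofReal (2 * n / √L) * lexpect μ F).toReal :=
        ENNReal.toReal_mono (by finiteness) htail
    _ = _ := by
        rw [ENNReal.toReal_add (by finiteness) (by finiteness), ENNReal.toReal_mul,
          ENNReal.toReal_mul, ENNReal.toReal_natCast, ENNReal.toReal_ofReal (by positivity)]

theorem statement9 {G : Type*} [Group G] [Countable G]
    (d : G → G → ℝ) (hmet : IsLeftInvMetric d)
    (μ : PMF G) (hmom : FiniteFirstMoment d μ)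
    (L : ℝ) (hL : 4 < L) (n : ℕ) (hn : 0 < n) :
    (∑' x : {x : G // (n : ℝ) * L < d 1 x}, d 1 (x : G) * ((convN μ n) (x : G)).toReal)
      ≤ (n : ℝ) * (∑' x : {x : G // Real.sqrt L < d 1 x}, d 1 (x : G) * (μ (x : G)).toReal)
        + (2 * (n : ℝ) / Real.sqrt L) * (∑' x : G, d 1 x * (μ x).toReal) :=
  statement9_general d hmet μ hmom L n

end NS
end

section
/- Let Γ be a finite group and μ any probability measure on Γ. Then the μ-random walk on Γ is ℓ¹-noise sensitive: for every ρ with 0 < ρ < 1, one has ‖π^ρ_n − μ_n × μ_n‖_TV → 0 as n → ∞. -/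
open Filter Real Topology MeasureTheory
open scoped ENNReal

namespace NS

/-!
Let `S` be the support of a probability measure `α` on a finite group and `u n` the uniform
measure on `S ^ n`. The cardinalities `|S ^ n|` are nondecreasing, hence constant for `n ≥ m`;
from then on every translate `y • S ^ b` with `y ∈ S ^ a`, and `S ^ a <• z` with `z ∈ S ^ b`,
is all of `S ^ (a + b)`. Hence `u a ⋆ α_b = u (a + b)`, and `⋆ u m` kills every signed measure
of total mass zero carried by `S ^ n`. With `e > 0` such that `e • u m ≤ α_m` (Doeblin's
minorization) this gives `‖α_(n+m) - u (n+m)‖₁ ≤ (1 - e) ‖α_n - u n‖₁`, while `‖α_n - u n‖₁`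
is nonincreasing, so `α_n - u n → 0`. The measures `π^ρ` and `μ × μ` have the same support and
`(μ × μ)_n = μ_n × μ_n`, so both `n`-step laws approach the same `u n`.
-/

open scoped Pointwise
open Finset

section ConvFun

variable {K : Type*} [Group K] [Fintype K]

def convFun (f g : K → ℝ) (x : K) : ℝ :=
  ∑ y, f y * g (y⁻¹ * x)

lemma convFun_eq_sum_right (f g : K → ℝ) (x : K) :
    convFun f g x = ∑ z, f (x * z⁻¹) * g z := by
  rw [convFun, ← ((Equiv.inv K).trans (Equiv.mulLeft x)).sum_comp]
  simp

lemma convFun_sub_left (f g h : K → ℝ) :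
    convFun (f - g) h = convFun f h - convFun g h := by
  ext x
  simp [convFun, sub_mul]

lemma convFun_sub_right (f g h : K → ℝ) :
    convFun f (g - h) = convFun f g - convFun f h := by
  ext x
  simp [convFun, mul_sub]

lemma convFun_smul_right (f g : K → ℝ) (c : ℝ) :
    convFun f (c • g) = c • convFun f g := by
  ext x
  simp [convFun, mul_sum, mul_left_comm]

lemma sum_abs_convFun_le (f g : K → ℝ) :
    ∑ x, |convFun f g x| ≤ (∑ x, |f x|) * ∑ x, |g x| := by
  calc ∑ x, |convFun f g x| ≤ ∑ x, ∑ y, |f y| * |g (y⁻¹ * x)| :=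
        sum_le_sum fun x _ => (abs_sum_le_sum_abs _ _).trans_eq (by simp [abs_mul])
    _ = ∑ y, |f y| * ∑ x, |g (y⁻¹ * x)| := by rw [sum_comm]; simp [mul_sum]
    _ = (∑ x, |f x|) * ∑ x, |g x| := by
        rw [sum_mul]
        exact sum_congr rfl fun y _ =>
          congrArg _ (Equiv.sum_comp (Equiv.mulLeft y⁻¹) fun x => |g x|)

end ConvFun

section Uniform

variable {K : Type*}

noncomputable def unif (A : Set K) : K → ℝ :=
  A.indicator fun _ => (A.ncard : ℝ)⁻¹

lemma sum_unif [Fintype K] {A : Set K} (hA : A.Nonempty) : ∑ x, unif A x = 1 := by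
  classical
  have hcard : (A.ncard : ℝ) ≠ 0 := by exact_mod_cast ((Set.ncard_pos A.toFinite).2 hA).ne'
  rw [unif, sum_indicator_eq_sum_filter, sum_const, nsmul_eq_mul, Set.filter_mem_univ_eq_toFinset,
    ← Set.ncard_eq_toFinset_card', mul_inv_cancel₀ hcard]

variable [Group K]

lemma unif_smul (y : K) (B : Set K) (x : K) : unif (y • B) x = unif B (y⁻¹ * x) := by
  classical
  simp [unif, Set.indicator_apply, Set.ncard_smul_set, Set.mem_smul_set_iff_inv_smul_mem]

lemma unif_op_smul (z : K) (A : Set K) (x : K) :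
    unif (MulOpposite.op z • A) x = unif A (x * z⁻¹) := by
  classical
  simp [unif, Set.indicator_apply, Set.ncard_smul_set, Set.mem_smul_set_iff_inv_smul_mem]

variable [Fintype K]

lemma convFun_unif_right {A B C : Set K} (h : ∀ y ∈ A, y • B = C) {f : K → ℝ}
    (hf : Function.support f ⊆ A) : convFun f (unif B) = (∑ y, f y) • unif C := by
  ext x
  simp only [convFun, Pi.smul_apply, smul_eq_mul, sum_mul]
  refine sum_congr rfl fun y _ => ?_
  by_cases hy : f y = 0
  · simp [hy]
  · rw [← unif_smul, h y (hf hy)]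

lemma unif_convFun {A B C : Set K} (h : ∀ z ∈ B, MulOpposite.op z • A = C) {g : K → ℝ}
    (hg : Function.support g ⊆ B) : convFun (unif A) g = (∑ z, g z) • unif C := by
  ext x
  simp only [convFun_eq_sum_right, Pi.smul_apply, smul_eq_mul, sum_mul]
  refine sum_congr rfl fun z _ => ?_
  by_cases hz : g z = 0
  · simp [hz]
  · rw [← unif_op_smul, h z (hg hz), mul_comm]

end Uniform

section PowerSets

variable {K : Type*} [Group K] [Finite K] {S : Set K}

lemma smul_pow_eq_pow_add {a b : ℕ} (h : (S ^ b).ncard = (S ^ (a + b)).ncard) {y : K}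
    (hy : y ∈ S ^ a) : y • S ^ b = S ^ (a + b) :=
  Set.eq_of_subset_of_ncard_le (pow_add S a b ▸ Set.smul_set_subset_mul hy)
    (by rw [Set.ncard_smul_set, h])

lemma op_smul_pow_eq_pow_add {a b : ℕ} (h : (S ^ a).ncard = (S ^ (a + b)).ncard) {z : K}
    (hz : z ∈ S ^ b) : MulOpposite.op z • S ^ a = S ^ (a + b) :=
  Set.eq_of_subset_of_ncard_le (pow_add S a b ▸ Set.op_smul_set_subset_mul hz)
    (by rw [Set.ncard_smul_set, h])

lemma monotone_ncard_pow (hS : S.Nonempty) : Monotone fun n => (S ^ n).ncard := by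
  obtain ⟨s, hs⟩ := hS
  refine monotone_nat_of_le_succ fun n => ?_
  rw [← Set.ncard_smul_set (MulOpposite.op s), pow_succ]
  exact Set.ncard_le_ncard (Set.op_smul_set_subset_mul hs)

lemma exists_ncard_pow_eq (hS : S.Nonempty) :
    ∃ m, ∀ n ≥ m, (S ^ n).ncard = (S ^ m).ncard := by
  have hbdd : BddAbove (Set.range fun n => (S ^ n).ncard) :=
    ⟨Nat.card K, by rintro _ ⟨n, rfl⟩; exact Set.ncard_le_card _⟩
  obtain ⟨m, hm⟩ := Nat.sSup_mem (Set.range_nonempty _) hbdd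
  exact ⟨m, fun n hn =>
    le_antisymm ((le_csSup hbdd ⟨n, rfl⟩).trans_eq hm.symm) (monotone_ncard_pow hS hn)⟩

end PowerSets

section Density

variable {X : Type*}

noncomputable def density (a : PMF X) (x : X) : ℝ :=
  (a x).toReal

lemma density_nonneg (a : PMF X) (x : X) : 0 ≤ density a x :=
  ENNReal.toReal_nonneg

lemma support_density (a : PMF X) : Function.support (density a) = a.support := by
  ext x
  simp [density, ENNReal.toReal_eq_zero_iff, a.apply_ne_top x]

lemma tv_nonneg (a b : PMF X) : 0 ≤ tv a b :=
  Real.iSup_nonneg fun _ => abs_nonneg _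

variable [Fintype X]

lemma sum_density (a : PMF X) : ∑ x, density a x = 1 := by
  rw [← ENNReal.toReal_one, ← a.tsum_coe, tsum_fintype,
    ENNReal.toReal_sum fun x _ => a.apply_ne_top x]
  rfl

lemma pmfSet_eq_sum_indicator (a : PMF X) (A : Set X) :
    pmfSet a A = ∑ x, A.indicator (density a) x := by
  classical
  have hfin (x : X) : A.indicator a x ≠ ⊤ :=
    ((Set.indicator_le_self _ _ x).trans_lt (a.apply_ne_top x).lt_top).ne
  rw [pmfSet, _root_.tsum_subtype, tsum_fintype, ENNReal.toReal_sum fun x _ => hfin x]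
  simp [Set.indicator_apply, apply_ite ENNReal.toReal, density]

lemma tv_le_sum_abs_sub (a b : PMF X) : tv a b ≤ ∑ x, |density a x - density b x| := by
  refine ciSup_le fun A => ?_
  rw [pmfSet_eq_sum_indicator, pmfSet_eq_sum_indicator, ← sum_sub_distrib, ← Set.indicator_sub]
  refine (abs_sum_le_sum_abs _ _).trans (sum_le_sum fun x _ => ?_)
  by_cases hx : x ∈ A <;> simp [hx]

lemma exists_pos_mul_unif_support_le (a : PMF X) :
    ∃ e > 0, ∀ x, e * unif a.support x ≤ density a x := by
  classical
  obtain ⟨x₀, hx₀, hmin⟩ :=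
    a.support.toFinset.exists_min_image (density a) (by simp [a.support_nonempty])
  have hx₀ : x₀ ∈ Function.support (density a) := by simpa [support_density] using hx₀
  refine ⟨density a x₀, (density_nonneg a x₀).lt_of_ne' hx₀, fun x => ?_⟩
  by_cases hx : x ∈ a.support
  · have hA : 0 < a.support.ncard := (Set.ncard_pos).2 ⟨x, hx⟩
    calc density a x₀ * unif a.support x ≤ density a x₀ * 1 := by
          gcongr
          · exact density_nonneg a x₀
          · rw [unif, Set.indicator_of_mem hx]
            exact inv_le_one_of_one_le₀ (by exact_mod_cast hA)
      _ ≤ density a x := by simpa using hmin x (by simp [hx])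
  · rw [unif, Set.indicator_of_notMem hx, mul_zero]
    exact density_nonneg a x

end Density

section Convolution

variable {K : Type*} [Group K]

lemma conv_assoc (a b c : PMF K) : conv (conv a b) c = conv a (conv b c) := by
  simp only [conv, PMF.bind_bind, PMF.bind_map, PMF.map_bind, PMF.map_comp, Function.comp_def,
    mul_assoc]

lemma conv_pure_one (a : PMF K) : conv a (PMF.pure 1) = a := by
  simp [conv, PMF.pure_map, PMF.bind_pure]

lemma convN_add (a : PMF K) (n k : ℕ) : convN a (n + k) = conv (convN a n) (convN a k) := by
  induction k with
  | zero => exact (conv_pure_one _).symm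
  | succ k ih => rw [← add_assoc, convN, ih, conv_assoc]; rfl

lemma support_conv (a b : PMF K) : (conv a b).support = a.support * b.support := by
  simp_rw [conv, PMF.support_bind, PMF.support_map]
  exact (Set.iUnion_image_left _).trans Set.image2_mul

lemma support_convN (a : PMF K) (n : ℕ) : (convN a n).support = a.support ^ n := by
  induction n with
  | zero => simp [convN, Set.singleton_one]
  | succ n ih => rw [convN, support_conv, ih, pow_succ]

variable [Fintype K]

lemma conv_apply (a b : PMF K) (x : K) : conv a b x = ∑ y, a y * b (y⁻¹ * x) := by
  classical
  have h (y z : K) : x = y * z ↔ z = y⁻¹ * x := by rw [eq_inv_mul_iff_mul_eq, eq_comm]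
  simp [conv, PMF.bind_apply, PMF.map_apply, tsum_fintype, h]

lemma density_conv (a b : PMF K) : density (conv a b) = convFun (density a) (density b) := by
  ext x
  rw [density, conv_apply, ENNReal.toReal_sum fun y _ =>
    ENNReal.mul_ne_top (a.apply_ne_top _) (b.apply_ne_top _)]
  simp [convFun, density, ENNReal.toReal_mul]

end Convolution

section Product

variable {X Y : Type*}

lemma prodPMF_apply (a : PMF X) (b : PMF Y) (x : X) (y : Y) :
    prodPMF a b (x, y) = a x * b y := by
  rw [prodPMF, PMF.bind_apply, tsum_eq_single x, PMF.map_apply, tsum_eq_single y, if_pos rfl]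
  · intro v hv
    rw [if_neg (by simpa [eq_comm] using hv)]
  · intro u hu
    simp [PMF.map_apply, Ne.symm hu]

lemma support_prodPMF (a : PMF X) (b : PMF Y) :
    (prodPMF a b).support = a.support ×ˢ b.support := by
  simp_rw [prodPMF, PMF.support_bind, PMF.support_map]
  exact (Set.iUnion_image_left _).trans Set.image2_mk_eq_prod

lemma support_diagPMF_subset (a : PMF X) : (diagPMF a).support ⊆ a.support ×ˢ a.support := by
  rw [diagPMF, PMF.support_map]
  rintro _ ⟨x, hx, rfl⟩
  exact ⟨hx, hx⟩

lemma support_mix {ρ : ℝ} (h0 : 0 < ρ) (h1 : ρ < 1) (a b : PMF X) :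
    (mix ρ a b).support = a.support ∪ b.support := by
  have hp0 : min ρ.toNNReal 1 ≠ 0 := by simp [h0]
  have hp1 : min ρ.toNNReal 1 ≠ 1 :=
    ((min_le_left _ _).trans_lt (Real.toNNReal_lt_one.2 h1)).ne
  ext x
  simp only [mix, PMF.mem_support_bind_iff, Bool.exists_bool, PMF.mem_support_bernoulli_iff,
    cond_false, cond_true, hp0, hp1, ne_eq, not_false_eq_true, true_and, Set.mem_union]
  simp [or_comm]

lemma prodPMF_conv {K L : Type*} [Group K] [Group L] [Fintype K] [Fintype L]
    (a b : PMF K) (c d : PMF L) :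
    prodPMF (conv a b) (conv c d) = conv (prodPMF a c) (prodPMF b d) := by
  ext ⟨x, y⟩
  simp only [prodPMF_apply, conv_apply, sum_mul_sum, Fintype.sum_prod_type, Prod.inv_mk,
    Prod.mk_mul_mk]
  exact sum_congr rfl fun u _ => sum_congr rfl fun v _ => by ring

variable {K : Type*} [Group K]

lemma prodPMF_convN [Fintype K] (a : PMF K) (n : ℕ) :
    prodPMF (convN a n) (convN a n) = convN (prodPMF a a) n := by
  induction n with
  | zero => simp [convN, prodPMF, PMF.pure_bind, PMF.pure_map]; rfl
  | succ n ih => rw [convN, convN, prodPMF_conv, ih]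

lemma support_piRho {ρ : ℝ} (h0 : 0 < ρ) (h1 : ρ < 1) (μ : PMF K) :
    (piRho μ ρ).support = (prodPMF μ μ).support := by
  rw [piRho, support_mix h0 h1, Set.union_eq_left.2]
  exact (support_prodPMF μ μ).symm ▸ support_diagPMF_subset μ

end Product

lemma tendsto_zero_of_antitone_of_le_mul {a : ℕ → ℝ} (ha : Antitone a)
    (ha0 : ∀ n, 0 ≤ a n) {m : ℕ} {q : ℝ} (hq : q < 1) (h : ∀ n, a (n + m) ≤ q * a n) :
    Tendsto a atTop (𝓝 0) := by
  have hlim := tendsto_atTop_ciInf ha ⟨0, by rintro _ ⟨n, rfl⟩; exact ha0 n⟩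
  have hL0 : 0 ≤ ⨅ n, a n := le_ciInf ha0
  have hLq : ⨅ n, a n ≤ q * ⨅ n, a n :=
    le_of_tendsto_of_tendsto' ((tendsto_add_atTop_iff_nat m).2 hlim) (hlim.const_mul q) h
  have hL : ⨅ n, a n = 0 := by nlinarith
  rwa [hL] at hlim

section RandomWalk

variable {K : Type*} [Group K] (α : PMF K)

noncomputable def unifDeviation (n : ℕ) : K → ℝ :=
  density (convN α n) - unif (α.support ^ n)

lemma support_unifDeviation_subset (n : ℕ) :
    Function.support (unifDeviation α n) ⊆ α.support ^ n := by
  refine (Function.support_sub _ _).trans (Set.union_subset ?_ Set.support_indicator_subset)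
  rw [support_density, support_convN]

variable [Fintype K]

lemma sum_unifDeviation (n : ℕ) : ∑ x, unifDeviation α n x = 0 := by
  simp [unifDeviation, sum_sub_distrib, sum_density, sum_unif (α.support_nonempty.pow)]

variable {α} {m : ℕ}

lemma unifDeviation_add
    (hm : ∀ n ≥ m, (α.support ^ n).ncard = (α.support ^ m).ncard)
    {n : ℕ} (hn : m ≤ n) (k : ℕ) :
    unifDeviation α (n + k) = convFun (unifDeviation α n) (density (convN α k)) := by
  have hsupp : Function.support (density (convN α k)) ⊆ α.support ^ k :=
    ((support_density _).trans (support_convN α k)).subset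
  rw [unifDeviation, unifDeviation, convN_add, density_conv, convFun_sub_left,
    unif_convFun (fun z => op_smul_pow_eq_pow_add ((hm n hn).trans (hm _ (by omega)).symm)) hsupp,
    sum_density, one_smul]

lemma convFun_unifDeviation_unif
    (hm : ∀ n ≥ m, (α.support ^ n).ncard = (α.support ^ m).ncard)
    {n : ℕ} (hn : m ≤ n) :
    convFun (unifDeviation α n) (unif (α.support ^ m)) = 0 := by
  rw [convFun_unif_right (fun y => smul_pow_eq_pow_add (hm _ (by omega)).symm)
    (support_unifDeviation_subset α n), sum_unifDeviation, zero_smul]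

lemma sum_abs_unifDeviation_add_le
    (hm : ∀ n ≥ m, (α.support ^ n).ncard = (α.support ^ m).ncard)
    {n : ℕ} (hn : m ≤ n) (k : ℕ) :
    ∑ x, |unifDeviation α (n + k) x| ≤ ∑ x, |unifDeviation α n x| := by
  rw [unifDeviation_add hm hn]
  refine (sum_abs_convFun_le _ _).trans_eq ?_
  simp [abs_of_nonneg (density_nonneg _ _), sum_density]

lemma sum_abs_unifDeviation_add_le_mul
    (hm : ∀ n ≥ m, (α.support ^ n).ncard = (α.support ^ m).ncard)
    {n : ℕ} (hn : m ≤ n) {e : ℝ}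
    (he : ∀ x, e * unif (α.support ^ m) x ≤ density (convN α m) x) :
    ∑ x, |unifDeviation α (n + m) x| ≤ (1 - e) * ∑ x, |unifDeviation α n x| := by
  have hsplit : unifDeviation α (n + m) =
      convFun (unifDeviation α n) (density (convN α m) - e • unif (α.support ^ m)) := by
    rw [convFun_sub_right, convFun_smul_right, convFun_unifDeviation_unif hm hn, smul_zero,
      sub_zero, unifDeviation_add hm hn]
  have hmass : ∑ x, |(density (convN α m) - e • unif (α.support ^ m)) x| = 1 - e := by
    simp [abs_of_nonneg (sub_nonneg.2 (he _)), sum_sub_distrib, sum_density, ← mul_sum,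
      sum_unif (α.support_nonempty.pow)]
  rw [hsplit, mul_comm, ← hmass]
  exact sum_abs_convFun_le _ _

lemma tendsto_sum_abs_unifDeviation (α : PMF K) :
    Tendsto (fun n => ∑ x, |unifDeviation α n x|) atTop (𝓝 0) := by
  obtain ⟨m, hm⟩ := exists_ncard_pow_eq α.support_nonempty
  obtain ⟨e, he, hle⟩ := exists_pos_mul_unif_support_le (convN α m)
  rw [support_convN] at hle
  rw [← tendsto_add_atTop_iff_nat m]
  refine tendsto_zero_of_antitone_of_le_mul (m := m) ?_
    (fun n => sum_nonneg fun x _ => abs_nonneg _) (sub_lt_self 1 he) fun n => ?_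
  · refine antitone_nat_of_succ_le fun n => ?_
    rw [add_right_comm]
    exact sum_abs_unifDeviation_add_le hm (Nat.le_add_left m n) 1
  · exact sum_abs_unifDeviation_add_le_mul hm (Nat.le_add_left m n) hle

theorem tendsto_tv_convN_of_support_eq {α β : PMF K} (h : α.support = β.support) :
    Tendsto (fun n => tv (convN α n) (convN β n)) atTop (𝓝 0) := by
  have hlim := (tendsto_sum_abs_unifDeviation α).add (tendsto_sum_abs_unifDeviation β)
  rw [add_zero] at hlim
  refine squeeze_zero (fun n => tv_nonneg _ _) (fun n => ?_) hlim
  calc tv (convN α n) (convN β n) ≤ ∑ x, |density (convN α n) x - density (convN β n) x| :=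
        tv_le_sum_abs_sub _ _
    _ ≤ ∑ x, (|unifDeviation α n x| + |unifDeviation β n x|) := by
        refine sum_le_sum fun x _ => ?_
        simp only [unifDeviation, Pi.sub_apply, h]
        exact (abs_sub_le _ _ _).trans_eq (by rw [abs_sub_comm (unif _ x)])
    _ = _ := sum_add_distrib

end RandomWalk

theorem statement13 {G : Type*} [Group G] [Finite G] (μ : PMF G)
    (ρ : ℝ) (h0 : 0 < ρ) (h1 : ρ < 1) :
    Filter.Tendsto
      (fun n : ℕ => tv (convN (piRho μ ρ) n) (prodPMF (convN μ n) (convN μ n)))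
      Filter.atTop (nhds 0) := by
  have := Fintype.ofFinite G
  simp_rw [prodPMF_convN]
  exact tendsto_tv_convN_of_support_eq (support_piRho h0 h1 μ)

end NS
end
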